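/- Let (a,u,b) be a 1-block of σᵏ(c) (i.e., a,b growing, u ∈ B*, and aub ⊑ σᵏ(c)) with k ≥ 1. Then there exist an origin (a',u',b') of σ (a 1-block of σ(c') for some growing letter c') and 0 ≤ l < k such that (a,u,b) = 𝔇ˡ(a',u',b'), where the descendant map is 𝔇(a,u,b) = (RC(σ(a)), RB(σ(a))·σ(u)·LB(σ(b)), LC(σ(b))). -/

import Mathlib

open List
open scoped Classical

namespace SubstPaper

variable {A : Type*}

/-- Apply a substitution letterwise to a word. -/
def applyW (σ : A → List A) (u : List A) : List A := u.flatMap σ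

/-- `n`-th iterate of a substitution on a word. -/
def iterW (σ : A → List A) (n : ℕ) (u : List A) : List A := (applyW σ)^[n] u

/-- Non-erasing substitution. -/
def NonErasing (σ : A → List A) : Prop := ∀ a, σ a ≠ []

/-- A letter is bounded if the lengths of its iterated images stay bounded. -/
def IsBounded (σ : A → List A) (a : A) : Prop := ∃ K, ∀ n, (iterW σ n [a]).length ≤ K

/-- A letter is growing if it is not bounded. -/
def IsGrowing (σ : A → List A) (a : A) : Prop := ¬ IsBounded σ a

/-- The prefix of `u` consisting of bounded letters, before the first growing letter. -/
noncomputable def LBw (σ : A → List A) (u : List A) : List A :=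
  u.takeWhile (fun a => decide (IsBounded σ a))

/-- The first growing letter of `u` (junk value if none). -/
noncomputable def LCw [Inhabited A] (σ : A → List A) (u : List A) : A :=
  (u.dropWhile (fun a => decide (IsBounded σ a))).headI

/-- The bounded suffix of `u`, after the last growing letter. -/
noncomputable def RBw (σ : A → List A) (u : List A) : List A :=
  (LBw σ u.reverse).reverse

/-- The last growing letter of `u` (junk value if none). -/
noncomputable def RCw [Inhabited A] (σ : A → List A) (u : List A) : A :=
  LCw σ u.reverse

/-- Growing letters occurring in a word. -/
def alphC (σ : A → List A) (u : List A) : Set A := {c | IsGrowing σ c ∧ c ∈ u}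

/-- The map on alphabets induced by the substitution: `D ↦ ⋃_{a ∈ D} alph_C(σ(a))`. -/
def FAlph (σ : A → List A) (D : Set A) : Set A := ⋃ a ∈ D, alphC σ (σ a)

/-- `D` is a `k`-periodic alphabet: nonempty set of growing letters, `k` least positive
with `F^[k] D = D`. -/
def IsKPeriodicAlph (σ : A → List A) (D : Set A) (k : ℕ) : Prop :=
  D.Nonempty ∧ (∀ a ∈ D, IsGrowing σ a) ∧ 0 < k ∧ (FAlph σ)^[k] D = D ∧
    ∀ j, 0 < j → (FAlph σ)^[j] D = D → k ≤ j

/-- `D` is a minimal alphabet: periodic with no proper nonempty periodic subalphabet. -/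
def IsMinimalAlph (σ : A → List A) (D : Set A) : Prop :=
  (∃ k, IsKPeriodicAlph σ D k) ∧
    ∀ D' ⊆ D, D'.Nonempty → (∃ k', IsKPeriodicAlph σ D' k') → D' = D

/-- The finite word `u` occurs in the bi-infinite word `x`. -/
def OccursIn (x : ℤ → A) (u : List A) : Prop :=
  ∃ i : ℤ, ∀ j : Fin u.length, x (i + j.1) = u.get j

/-- The substitution subshift `X_σ`. -/
def Xsub (σ : A → List A) : Set (ℤ → A) :=
  {x | ∀ u, OccursIn x u → ∃ a n, u <:+: iterW σ n [a]}

/-- The left shift on bi-infinite words. -/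
def shiftT (x : ℤ → A) : ℤ → A := fun i => x (i + 1)

/-- A subshift: nonempty, closed, shift-invariant. -/
def IsSubshift [TopologicalSpace A] (X : Set (ℤ → A)) : Prop :=
  X.Nonempty ∧ IsClosed X ∧ shiftT '' X = X

/-- A minimal subshift: contains no proper subshift. -/
def IsMinimalSubshift [TopologicalSpace A] (X : Set (ℤ → A)) : Prop :=
  IsSubshift X ∧ ∀ Y ⊆ X, IsSubshift Y → Y = X

/-- The periodic bi-infinite word `ωuω`. -/
noncomputable def perWord [Inhabited A] (u : List A) : ℤ → A :=
  fun i => u.getD ((i % (u.length : ℤ)).toNat) default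

/-- The shift-orbit closure `X(x)` of a bi-infinite word. -/
def orbitClosure [TopologicalSpace A] (x : ℤ → A) : Set (ℤ → A) :=
  closure {y | ∃ k : ℤ, ∀ i, y i = x (i + k)}

/-- `x` is the letterwise image of `y` under `σ`, with the origin at the image of
position `0`. -/
def IsSubstImage (σ : A → List A) (y x : ℤ → A) : Prop :=
  ∃ c : ℤ → ℤ, c 0 = 0 ∧ (∀ i, c (i + 1) = c i + (σ (y i)).length) ∧
    ∀ i : ℤ, ∀ j : Fin (σ (y i)).length, x (c i + j.1) = (σ (y i)).get j

/-- The induced map `σ̃` on subshifts: all shifts of images of elements of `X`. -/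
def tildeS (σ : A → List A) (X : Set (ℤ → A)) : Set (ℤ → A) :=
  {z | ∃ x ∈ X, ∃ k : ℤ, IsSubstImage σ x (fun i => z (i + k))}

/-- Growing letters occurring in some element of `X`. -/
def alphCX (σ : A → List A) (X : Set (ℤ → A)) : Set A :=
  {c | IsGrowing σ c ∧ ∃ x ∈ X, ∃ i : ℤ, x i = c}

/-- The subshift of the restriction `σᵏ|_E` (words whose factors occur in some
`σ^{kn}(a)`, `a ∈ E`). -/
def Xrestr (σ : A → List A) (E : Set A) (k : ℕ) : Set (ℤ → A) :=
  {x | ∀ u, OccursIn x u → ∃ a ∈ E, ∃ n, u <:+: iterW σ (k * n) [a]}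

/-- A growing letter `c` is left-isolated: `σⁿ(c) = u c v` with `u` nonempty bounded. -/
def LeftIsolated (σ : A → List A) (c : A) : Prop :=
  IsGrowing σ c ∧ ∃ n, 1 ≤ n ∧ ∃ u v : List A, u ≠ [] ∧ (∀ b ∈ u, IsBounded σ b) ∧
    iterW σ n [c] = u ++ c :: v

/-- A growing letter `c` is right-isolated: `σⁿ(c) = v c u` with `u` nonempty bounded. -/
def RightIsolated (σ : A → List A) (c : A) : Prop :=
  IsGrowing σ c ∧ ∃ n, 1 ≤ n ∧ ∃ u v : List A, u ≠ [] ∧ (∀ b ∈ u, IsBounded σ b) ∧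
    iterW σ n [c] = v ++ c :: u

/-- Growing letter that is neither left- nor right-isolated (member of `C_niso`). -/
def NonIsolated (σ : A → List A) (c : A) : Prop :=
  IsGrowing σ c ∧ ¬ LeftIsolated σ c ∧ ¬ RightIsolated σ c

/-- A periodic letter: bounded, and occurring in some `σⁿ(a)`, `n ≥ 1`. -/
def IsPeriodicLetter (σ : A → List A) (a : A) : Prop :=
  IsBounded σ a ∧ ∃ n, 1 ≤ n ∧ [a] <:+: iterW σ n [a]

/-- `(a,u,b)` is a 1-block of the word `w`. -/
def Is1Block (σ : A → List A) (w : List A) (t : A × List A × A) : Prop :=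
  IsGrowing σ t.1 ∧ IsGrowing σ t.2.2 ∧ (∀ x ∈ t.2.1, IsBounded σ x) ∧
    (t.1 :: (t.2.1 ++ [t.2.2])) <:+: w

/-- The descendant map on 1-blocks. -/
noncomputable def Desc [Inhabited A] (σ : A → List A) : A × List A × A → A × List A × A :=
  fun t => (RCw σ (σ t.1), RBw σ (σ t.1) ++ applyW σ t.2.1 ++ LBw σ (σ t.2.2), LCw σ (σ t.2.2))

/-- The bi-infinite word `ωu.wvω`. -/
noncomputable def biWord [Inhabited A] (u w v : List A) : ℤ → A := fun i =>
  if i < 0 then u.getD ((i % (u.length : ℤ)).toNat) default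
  else if i < (w.length : ℤ) then w.getD i.toNat default
  else v.getD (((i - (w.length : ℤ)) % (v.length : ℤ)).toNat) default

lemma applyW_append (σ : A → List A) (u v : List A) :
    applyW σ (u ++ v) = applyW σ u ++ applyW σ v := List.flatMap_append ..

lemma applyW_singleton (σ : A → List A) (a : A) : applyW σ [a] = σ a := by
  simp [applyW]

lemma iterW_succ (σ : A → List A) (n : ℕ) (u : List A) :
    iterW σ (n + 1) u = iterW σ n (applyW σ u) := Function.iterate_succ_apply ..

lemma iterW_succ' (σ : A → List A) (n : ℕ) (u : List A) :
    iterW σ (n + 1) u = applyW σ (iterW σ n u) := Function.iterate_succ_apply' ..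

lemma iterW_append (σ : A → List A) (n : ℕ) (u v : List A) :
    iterW σ n (u ++ v) = iterW σ n u ++ iterW σ n v := by
  induction n generalizing u v with
  | zero => rfl
  | succ n ih => rw [iterW_succ, applyW_append, ih, iterW_succ, iterW_succ]

lemma iterW_length_sum (σ : A → List A) (n : ℕ) (u : List A) :
    (iterW σ n u).length = (u.map (fun a => (iterW σ n [a]).length)).sum := by
  induction u with
  | nil =>
    have : iterW σ n ([] : List A) = [] := by
      induction n with
      | zero => rfl
      | succ n ih => rw [iterW_succ']; rw [ih]; rfl
    simp [this]
  | cons a u ih =>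
    have : (a :: u) = [a] ++ u := rfl
    rw [this, iterW_append]
    simp [ih]

lemma bounded_of_mem_image (σ : A → List A) {d a : A} (hd : IsBounded σ d)
    (ha : a ∈ σ d) : IsBounded σ a := by
  obtain ⟨K, hK⟩ := hd
  refine ⟨K, fun n => ?_⟩
  have h1 : (iterW σ n [a]).length ≤ (iterW σ n (σ d)).length := by
    rw [iterW_length_sum σ n (σ d)]
    exact List.single_le_sum (by simp) _ (List.mem_map_of_mem ha)
  have h2 : iterW σ n (σ d) = iterW σ (n + 1) [d] := by
    rw [iterW_succ, applyW_singleton]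
  exact h2 ▸ h1 |>.trans (hK (n + 1))

lemma growing_of_mem_image (σ : A → List A) {d a : A} (ha : IsGrowing σ a)
    (hmem : a ∈ σ d) : IsGrowing σ d :=
  fun hd => ha (bounded_of_mem_image σ hd hmem)
lemma exists_uniform_bound (σ : A → List A) [Fintype A] :
    ∃ K, ∀ a, IsBounded σ a → ∀ n, (iterW σ n [a]).length ≤ K := by
  classical
  refine ⟨∑ a : A, (if h : IsBounded σ a then h.choose else 0), fun a ha n => ?_⟩
  have h1 : (iterW σ n [a]).length ≤ (if h : IsBounded σ a then h.choose else 0) := by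
    rw [dif_pos ha]; exact ha.choose_spec n
  exact h1.trans (Finset.single_le_sum (f := fun a => if h : IsBounded σ a then h.choose else 0) (fun _ _ => Nat.zero_le _) (Finset.mem_univ a))

lemma bounded_of_image_bounded (σ : A → List A) [Fintype A] {d : A}
    (h : ∀ x ∈ σ d, IsBounded σ x) : IsBounded σ d := by
  obtain ⟨K, hK⟩ := exists_uniform_bound σ
  refine ⟨max 1 ((σ d).length * K), fun n => ?_⟩
  cases n with
  | zero => exact le_trans (by simp [iterW]) (le_max_left 1 _)
  | succ n =>
    refine le_trans ?_ (le_max_right 1 _)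
    rw [iterW_succ, applyW_singleton, iterW_length_sum]
    calc ((σ d).map (fun a => (iterW σ n [a]).length)).sum
        ≤ ((σ d).map (fun a => (iterW σ n [a]).length)).length * K := by
          refine List.sum_le_card_nsmul _ K ?_
          intro x hx
          obtain ⟨a, ha, rfl⟩ := List.mem_map.1 hx
          exact hK a (h a ha) n
      _ = (σ d).length * K := by rw [List.length_map]
lemma LBw_eq (σ : A → List A) {p : List A} (hp : ∀ x ∈ p, IsBounded σ x)
    {a : A} (ha : IsGrowing σ a) (q : List A) : LBw σ (p ++ a :: q) = p := by
  induction p with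
  | nil =>
    have : decide (IsBounded σ a) = false := decide_eq_false ha
    simp [LBw, List.takeWhile_cons, this]
  | cons x p ih =>
    have hx : IsBounded σ x := hp x (List.mem_cons_self)
    simp only [LBw, List.cons_append, List.takeWhile_cons, decide_eq_true hx]
    exact congrArg (x :: ·) (ih (fun y hy => hp y (List.mem_cons_of_mem _ hy)))

lemma LCw_eq (σ : A → List A) [Inhabited A] {p : List A} (hp : ∀ x ∈ p, IsBounded σ x)
    {a : A} (ha : IsGrowing σ a) (q : List A) : LCw σ (p ++ a :: q) = a := by
  induction p with
  | nil =>
    have : decide (IsBounded σ a) = false := decide_eq_false ha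
    simp [LCw, List.dropWhile_cons, this]
  | cons x p ih =>
    have hx : IsBounded σ x := hp x (List.mem_cons_self)
    simp only [LCw, List.cons_append, List.dropWhile_cons, decide_eq_true hx]
    exact ih (fun y hy => hp y (List.mem_cons_of_mem _ hy))

lemma RBw_eq (σ : A → List A) {p : List A} (hp : ∀ x ∈ p, IsBounded σ x)
    {a : A} (ha : IsGrowing σ a) (q : List A) : RBw σ (q ++ a :: p) = p := by
  have h : (q ++ a :: p).reverse = p.reverse ++ a :: q.reverse := by
    simp
  rw [RBw, h, LBw_eq σ (fun x hx => hp x (List.mem_reverse.1 hx)) ha, List.reverse_reverse]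

lemma RCw_eq (σ : A → List A) [Inhabited A] {p : List A} (hp : ∀ x ∈ p, IsBounded σ x)
    {a : A} (ha : IsGrowing σ a) (q : List A) : RCw σ (q ++ a :: p) = a := by
  have h : (q ++ a :: p).reverse = p.reverse ++ a :: q.reverse := by
    simp
  rw [RCw, h, LCw_eq σ (fun x hx => hp x (List.mem_reverse.1 hx)) ha]
lemma find_b (σ : A → List A) [Fintype A] {b : A} :
    ∀ (w u t : List A), (∀ x ∈ u, IsBounded σ x) →
      applyW σ w = u ++ b :: t →
      ∃ u' b' w'' u₃ r, w = u' ++ b' :: w'' ∧ (∀ e ∈ u', IsBounded σ e) ∧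
        u = applyW σ u' ++ u₃ ∧ σ b' = u₃ ++ b :: r := by
  intro w
  induction w with
  | nil =>
    intro u t _ h
    exact absurd h.symm (by simp [applyW])
  | cons e w₁ ih =>
    intro u t hu h
    have h' : σ e ++ applyW σ w₁ = u ++ b :: t := by
      simpa [applyW] using h
    rcases List.append_eq_append_iff.1 h' with ⟨a', ha1, ha2⟩ | ⟨c', hc1, hc2⟩
    · -- u = σ e ++ a'
      have hσe : ∀ x ∈ σ e, IsBounded σ x := fun x hx => hu x (ha1 ▸ List.mem_append_left _ hx)
      have he : IsBounded σ e := bounded_of_image_bounded σ hσe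
      have ha' : ∀ x ∈ a', IsBounded σ x := fun x hx => hu x (ha1 ▸ List.mem_append_right _ hx)
      obtain ⟨u', b', w'', u₃, r, hw, hub, hu3, hb⟩ := ih a' t ha' ha2
      refine ⟨e :: u', b', w'', u₃, r, by simp [hw], ?_, ?_, hb⟩
      · intro x hx
        rcases List.mem_cons.1 hx with rfl | hx
        · exact he
        · exact hub x hx
      · rw [ha1, hu3]; simp [applyW]
    · -- σ e = u ++ c', b :: t = c' ++ applyW σ w₁
      cases c' with
      | nil =>
        simp only [List.append_nil] at hc1
        have hσe : ∀ x ∈ σ e, IsBounded σ x := fun x hx => hu x (hc1 ▸ hx)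
        have he : IsBounded σ e := bounded_of_image_bounded σ hσe
        obtain ⟨u', b', w'', u₃, r, hw, hub, hu3, hb⟩ := ih [] t (by simp) (by
          simpa using hc2.symm)
        refine ⟨e :: u', b', w'', u₃, r, by simp [hw], ?_, ?_, hb⟩
        · intro x hx
          rcases List.mem_cons.1 hx with rfl | hx
          · exact he
          · exact hub x hx
        · obtain ⟨h1, h2⟩ := List.append_eq_nil_iff.1 hu3.symm
          rw [← hc1, h2]
          simp only [applyW] at h1 ⊢
          simp only [List.flatMap_cons, h1, List.append_nil]
      | cons y c'' =>
        obtain ⟨rfl, _⟩ : b = y ∧ t = c'' ++ applyW σ w₁ := by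
          simpa using hc2
        exact ⟨[], e, w₁, u, c'', rfl, by simp, by simp [applyW], hc1⟩
lemma decompose_main (σ : A → List A) [Fintype A] [Inhabited A] {a b : A} {u : List A}
    (ha : IsGrowing σ a) (hb : IsGrowing σ b) (hu : ∀ x ∈ u, IsBounded σ x)
    {s r' u₂ t : List A} {d : A} {w₁ : List A}
    (hr1 : σ d = s ++ a :: r') (hu' : u = r' ++ u₂)
    (hX : applyW σ w₁ = u₂ ++ b :: t) :
    ∃ a' u' b', (a' :: (u' ++ [b'])) <:+: (d :: w₁) ∧ (∀ e ∈ u', IsBounded σ e) ∧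
      a ∈ σ a' ∧ b ∈ σ b' ∧
      RCw σ (σ a') = a ∧ LCw σ (σ b') = b ∧
      RBw σ (σ a') ++ applyW σ u' ++ LBw σ (σ b') = u := by
  have hr'b : ∀ x ∈ r', IsBounded σ x := fun x hx => hu x (hu' ▸ List.mem_append_left _ hx)
  have hu₂b : ∀ x ∈ u₂, IsBounded σ x := fun x hx => hu x (hu' ▸ List.mem_append_right _ hx)
  obtain ⟨u', b', w'', u₃, rr, hw, hub, hu3, hbb⟩ := find_b σ w₁ u₂ t hu₂b hX
  have hu₃b : ∀ x ∈ u₃, IsBounded σ x := fun x hx => hu₂b x (hu3 ▸ List.mem_append_right _ hx)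
  refine ⟨d, u', b', ?_, hub, ?_, ?_, ?_, ?_, ?_⟩
  · exact (List.prefix_iff_eq_append.2 (by simp [hw])).isInfix
  · rw [hr1]; simp
  · rw [hbb]; simp
  · rw [hr1]; exact RCw_eq σ hr'b ha s
  · rw [hbb]; exact LCw_eq σ hu₃b hb rr
  · rw [hr1, hbb, RBw_eq σ hr'b ha s, LBw_eq σ hu₃b hb rr, hu', hu3, List.append_assoc]

lemma decompose (σ : A → List A) [Fintype A] [Inhabited A] {a b : A} {u : List A}
    (ha : IsGrowing σ a) (hb : IsGrowing σ b) (hu : ∀ x ∈ u, IsBounded σ x) :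
    ∀ (w s t : List A), applyW σ w = s ++ (a :: (u ++ [b])) ++ t →
      (∃ c', c' ∈ w ∧ (a :: (u ++ [b])) <:+: σ c') ∨
      (∃ a' u' b', (a' :: (u' ++ [b'])) <:+: w ∧ (∀ e ∈ u', IsBounded σ e) ∧
        a ∈ σ a' ∧ b ∈ σ b' ∧
        RCw σ (σ a') = a ∧ LCw σ (σ b') = b ∧
        RBw σ (σ a') ++ applyW σ u' ++ LBw σ (σ b') = u) := by
  intro w
  induction w with
  | nil =>
    intro s t h
    exact absurd h.symm (by simp [applyW])
  | cons d w₁ ih =>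
    intro s t h
    have h' : σ d ++ applyW σ w₁ = s ++ ((a :: (u ++ [b])) ++ t) := by
      simpa [applyW, List.append_assoc] using h
    rcases List.append_eq_append_iff.1 h' with ⟨s', hs1, hs2⟩ | ⟨r, hr1, hr2⟩
    · -- s = σ d ++ s' : the block lies in applyW σ w₁
      have hs2' : applyW σ w₁ = s' ++ (a :: (u ++ [b])) ++ t := by
        rw [hs2, List.append_assoc]
      rcases ih s' t hs2' with ⟨c', hc1, hc2⟩ | ⟨a', u', b', hinf, rest⟩
      · exact Or.inl ⟨c', List.mem_cons_of_mem _ hc1, hc2⟩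
      · exact Or.inr ⟨a', u', b', hinf.trans (List.infix_cons (List.infix_refl _)), rest⟩
    · cases r with
      | nil =>
        have hs2' : applyW σ w₁ = [] ++ (a :: (u ++ [b])) ++ t := by
          simpa using hr2.symm
        rcases ih [] t hs2' with ⟨c', hc1, hc2⟩ | ⟨a', u', b', hinf, rest⟩
        · exact Or.inl ⟨c', List.mem_cons_of_mem _ hc1, hc2⟩
        · exact Or.inr ⟨a', u', b', hinf.trans (List.infix_cons (List.infix_refl _)), rest⟩
      | cons x r' =>
        rw [List.cons_append, List.append_assoc, List.cons_append] at hr2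
        obtain ⟨rfl, hr2'⟩ := List.cons_eq_cons.1 hr2
        rcases List.append_eq_append_iff.1 hr2' with ⟨a', ha1, ha2⟩ | ⟨c', hc1, hc2⟩
        · -- r' = u ++ a', [b] ++ t = a' ++ applyW σ w₁
          cases a' with
          | nil =>
            simp only [List.append_nil] at ha1
            simp only [List.nil_append] at ha2
            exact Or.inr (decompose_main σ (u₂ := []) ha hb hu (by rw [hr1, ha1])
              (by simp [ha1]) (by simpa using ha2.symm))
          | cons y q' =>
            obtain ⟨rfl, _⟩ := List.cons_eq_cons.1 ha2
            refine Or.inl ⟨d, List.mem_cons_self, ⟨s, q', ?_⟩⟩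
            rw [hr1, ha1]
            simp [List.append_assoc]
        · -- u = r' ++ c', applyW σ w₁ = c' ++ ([b] ++ t)
          exact Or.inr (decompose_main σ ha hb hu hr1 hc1 (by simpa using hc2))
/-- Every 1-block of `σᵏ(c)` is an iterated descendant of an origin of `σ`. -/
theorem stmt18 [Fintype A] [Inhabited A] (σ : A → List A) (hσ : NonErasing σ)
    (k : ℕ) (hk : 1 ≤ k) (c : A) (hc : IsGrowing σ c)
    (t : A × List A × A) (ht : Is1Block σ (iterW σ k [c]) t) :
    ∃ t' : A × List A × A, ∃ l < k,
      (∃ c', IsGrowing σ c' ∧ Is1Block σ (σ c') t') ∧ t = (Desc σ)^[l] t' := by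
  induction k, hk using Nat.le_induction generalizing c t with
  | base =>
    refine ⟨t, 0, Nat.zero_lt_one, ⟨c, hc, ?_⟩, rfl⟩
    have h1 : iterW σ 1 [c] = σ c := by
      rw [iterW_succ, applyW_singleton]; rfl
    rwa [h1] at ht
  | succ k hk1 ih =>
    obtain ⟨a, u, b⟩ := t
    obtain ⟨ha, hb, hu, hinf⟩ := ht
    simp only at ha hb hu hinf
    have hbig : iterW σ (k + 1) [c] = applyW σ (iterW σ k [c]) := iterW_succ' σ k [c]
    obtain ⟨s, t₀, hst⟩ := hinf
    have heq : applyW σ (iterW σ k [c]) = s ++ (a :: (u ++ [b])) ++ t₀ := by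
      rw [← hbig, ← hst]
    rcases decompose σ ha hb hu (iterW σ k [c]) s t₀ heq with
      ⟨c', hc'mem, hc'inf⟩ | ⟨a', u', b', hinf', hub, hamem, hbmem, hRC, hLC, hmid⟩
    · -- the block occurs in σ c'
      have hc'g : IsGrowing σ c' :=
        growing_of_mem_image σ ha (hc'inf.subset (List.mem_cons_self))
      exact ⟨(a, u, b), 0, Nat.succ_pos _, ⟨c', hc'g, ⟨ha, hb, hu, hc'inf⟩⟩, rfl⟩
    · -- descendant of a 1-block of iterW σ k [c]
      have ha'g : IsGrowing σ a' := growing_of_mem_image σ ha hamem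
      have hb'g : IsGrowing σ b' := growing_of_mem_image σ hb hbmem
      have hblock : Is1Block σ (iterW σ k [c]) (a', u', b') := ⟨ha'g, hb'g, hub, hinf'⟩
      obtain ⟨t', l, hl, horigin, hdesc⟩ := ih c hc (a', u', b') hblock
      refine ⟨t', l + 1, by omega, horigin, ?_⟩
      rw [Function.iterate_succ_apply', ← hdesc]
      simp only [Desc]
      exact Prod.ext hRC.symm (Prod.ext (by rw [hmid]) hLC.symm)

end SubstPaper
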